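/- arXiv:2301.13424 — 2 statements merged into one kernel-verified Lean document; each statement's English description precedes it below -/
import Mathlib

section
/- Assume μ satisfies Assumption (A) and that Ω⁻ is nonempty, and let ρ = ρ(Ω⁻) be the inradius of Ω⁻. Then almost surely liminf_{n→∞} ρ_n ≥ ρ. -/
open MeasureTheory ProbabilityTheory Filter Metric

/-- Logarithmic potential of a measure on ℂ. -/
noncomputable def logPot (μ : Measure ℂ) (z : ℂ) : ℝ :=
  ∫ w, Real.log ‖z - w‖ ∂μ

/-- Topological support of a measure on ℂ. -/
def msupport (μ : Measure ℂ) : Set ℂ :=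
  {x : ℂ | ∀ U ∈ nhds x, 0 < μ U}

/-- Assumption (A): for every compact `K`, `sup_{z ∈ K} ∫ (log|z-w|)² dμ(w) < ∞`. -/
def AssumptionA (μ : Measure ℂ) : Prop :=
  ∀ K : Set ℂ, IsCompact K → ∃ C : ℝ, ∀ z ∈ K,
    ∫⁻ w, ENNReal.ofReal ((Real.log ‖z - w‖) ^ 2) ∂μ ≤ ENNReal.ofReal C

/-- Assumption (D): `μ(B(z,r)) ≤ C rᵉ` for all `z` and `r > 0`. -/
def AssumptionD (μ : Measure ℂ) : Prop :=
  ∃ C : ℝ, ∃ ε : ℝ, 0 < ε ∧ ∀ z : ℂ, ∀ r : ℝ, 0 < r →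
    μ (Metric.ball z r) ≤ ENNReal.ofReal (C * r ^ ε)

/-- The filled unit lemniscate of `p_n(z) = ∏_{k<n} (z - X k ω)`. -/
def lemniscate {Ω : Type*} (X : ℕ → Ω → ℂ) (n : ℕ) (ω : Ω) : Set ℂ :=
  {z : ℂ | ‖∏ k ∈ Finset.range n, (z - X k ω)‖ < 1}

/-- Inradius of a planar set: the sup of radii of open disks contained in it (0 if none). -/
noncomputable def inradius (U : Set ℂ) : ℝ :=
  sSup {r : ℝ | 0 < r ∧ ∃ c : ℂ, Metric.ball c r ⊆ U}

open Topology

/-!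
Truncating the kernel, `log max(|z - w|, e^{-M})` dominates `log |z - w|` and is `e^M`-Lipschitz
in `z`; by monotone convergence its `μ`-integral is negative at a point of `Ω⁻` once `M` is large.
The strong law of large numbers at that point then gives `|p_n| ≤ exp (∑ truncated logs) < 1` on
a fixed disk around it for all large `n`, and compactness extends this to every closed disk inside
`Ω⁻`. The inradii `ρ_n` stay bounded because the `X_k` lie in the compact support and `Λ_n` lies
within distance `1` of the `X_k`.
-/

lemma inradius_nonneg (U : Set ℂ) : 0 ≤ inradius U :=
  Real.sSup_nonneg fun _ hr => hr.1.le

lemma le_inradius_of_ball_subset {U : Set ℂ} (hU : Bornology.IsBounded U) {c : ℂ} {r : ℝ}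
    (h : ball c r ⊆ U) : r ≤ inradius U := by
  rcases le_or_gt r 0 with hr | hr
  · exact hr.trans (inradius_nonneg U)
  refine le_csSup ⟨diam U / 2, ?_⟩ ⟨hr, c, h⟩
  rintro s ⟨hs, c', hc'⟩
  have hdiam := diam_mono hc' hU
  rw [diam_ball_eq c' hs.le] at hdiam
  linarith

lemma inradius_mono {U V : Set ℂ} (hV : Bornology.IsBounded V) (h : U ⊆ V) :
    inradius U ≤ inradius V :=
  Real.sSup_le (fun _ ⟨_, _, hc⟩ => le_inradius_of_ball_subset hV (hc.trans h))
    (inradius_nonneg V)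

/-- Rational radii, with one centre each, keep the hypothesis a countable family of events when
`f` is random. -/
lemma inradius_le_liminf {U : Set ℂ} {f : ℕ → ℝ} {B : ℝ} (hf0 : ∀ n, 0 ≤ f n)
    (hfB : ∀ n, f n ≤ B)
    (h : ∀ q : ℚ, (∃ c, closedBall c (q : ℝ) ⊆ U) → ∀ᶠ n in atTop, (q : ℝ) ≤ f n) :
    inradius U ≤ liminf f atTop := by
  have hcobdd : IsCoboundedUnder (· ≥ ·) atTop f := isCoboundedUnder_ge_of_le atTop hfB
  refine Real.sSup_le (fun r ⟨_, c, hc⟩ => le_of_forall_rat_lt_imp_le fun q hq => ?_)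
    (le_liminf_of_le hcobdd (Eventually.of_forall hf0))
  exact le_liminf_of_le hcobdd (h q ⟨c, (closedBall_subset_ball hq).trans hc⟩)

lemma lemniscate_subset_thickening {Ω : Type*} {X : ℕ → Ω → ℂ} {ω : Ω} {S : Set ℂ}
    (hX : ∀ k, X k ω ∈ S) (n : ℕ) : lemniscate X n ω ⊆ thickening 1 S := by
  intro z hz
  by_contra hzS
  simp only [mem_thickening_iff, not_exists, not_and, not_lt] at hzS
  have hprod : 1 ≤ ‖∏ k ∈ Finset.range n, (z - X k ω)‖ := by
    rw [norm_prod]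
    exact Finset.one_le_prod fun k _ => (hzS _ (hX k)).trans_eq (dist_eq_norm _ _)
  exact hprod.not_gt hz

/-- Truncated inside the logarithm so that it is `exp M`-Lipschitz in `z`; the kernel
`max (log |z - w|) (-M)` is not, as it jumps at `w = z` where `Real.log 0 = 0`. -/
noncomputable def truncLog (M : ℝ) (z w : ℂ) : ℝ :=
  Real.log (max ‖z - w‖ (Real.exp (-M)))

lemma truncLog_arg_pos (M : ℝ) (z w : ℂ) : 0 < max ‖z - w‖ (Real.exp (-M)) :=
  lt_max_of_lt_right (Real.exp_pos _)

lemma continuous_truncLog (M : ℝ) (z : ℂ) : Continuous (truncLog M z) :=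
  ((continuous_const.sub continuous_id).norm.max continuous_const).log
    fun w => (truncLog_arg_pos M z w).ne'

lemma neg_le_truncLog (M : ℝ) (z w : ℂ) : -M ≤ truncLog M z w := by
  simpa only [truncLog, Real.log_exp] using
    Real.log_le_log (Real.exp_pos (-M)) (le_max_right ‖z - w‖ _)

lemma truncLog_le_max (M : ℝ) (z w : ℂ) : truncLog M z w ≤ max (Real.log ‖z - w‖) (-M) := by
  rcases le_total ‖z - w‖ (Real.exp (-M)) with h | h
  · rw [truncLog, max_eq_right h, Real.log_exp]
    exact le_max_right _ _
  · rw [truncLog, max_eq_left h]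
    exact le_max_left _ _

lemma truncLog_le_add (M : ℝ) (y z w : ℂ) :
    truncLog M y w ≤ truncLog M z w + Real.exp M * ‖y - z‖ := by
  set a := max ‖y - w‖ (Real.exp (-M))
  set b := max ‖z - w‖ (Real.exp (-M))
  have hb : 0 < b := truncLog_arg_pos M z w
  have hab : a - b ≤ ‖y - z‖ :=
    calc a - b ≤ |a - b| := le_abs_self _
      _ ≤ |‖y - w‖ - ‖z - w‖| := abs_max_sub_max_le_abs _ _ _
      _ ≤ ‖(y - w) - (z - w)‖ := abs_norm_sub_norm_le _ _
      _ = ‖y - z‖ := by rw [sub_sub_sub_cancel_right]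
  have hlog : Real.log a - Real.log b ≤ (a - b) / b := by
    rw [← Real.log_div (truncLog_arg_pos M y w).ne' hb.ne', sub_div, div_self hb.ne']
    exact Real.log_le_sub_one_of_pos (div_pos (truncLog_arg_pos M y w) hb)
  have hdiv : (a - b) / b ≤ Real.exp M * ‖y - z‖ := by
    rw [div_le_iff₀ hb]
    calc a - b ≤ ‖y - z‖ := hab
      _ = Real.exp M * ‖y - z‖ * Real.exp (-M) := by
        rw [mul_right_comm, ← Real.exp_add, add_neg_cancel, Real.exp_zero, one_mul]
      _ ≤ Real.exp M * ‖y - z‖ * b := by gcongr; exact le_max_right _ _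
  simp only [truncLog]
  linarith

lemma norm_prod_sub_le_exp_sum (M : ℝ) (y : ℂ) (n : ℕ) (x : ℕ → ℂ) :
    ‖∏ k ∈ Finset.range n, (y - x k)‖ ≤ Real.exp (∑ k ∈ Finset.range n, truncLog M y (x k)) := by
  rw [norm_prod, Real.exp_sum]
  refine Finset.prod_le_prod (fun k _ => norm_nonneg _) fun k _ => ?_
  rw [truncLog, Real.exp_log (truncLog_arg_pos M y (x k))]
  exact le_max_left _ _

lemma norm_prod_sub_lt_one {M r : ℝ} {n : ℕ} {x : ℕ → ℂ} {y z : ℂ} (hy : ‖y - z‖ ≤ r)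
    (h : ∑ k ∈ Finset.range n, truncLog M z (x k) + n * (Real.exp M * r) < 0) :
    ‖∏ k ∈ Finset.range n, (y - x k)‖ < 1 := by
  have hsum : ∑ k ∈ Finset.range n, truncLog M y (x k)
      ≤ ∑ k ∈ Finset.range n, truncLog M z (x k) + n * (Real.exp M * r) := by
    calc ∑ k ∈ Finset.range n, truncLog M y (x k)
        ≤ ∑ k ∈ Finset.range n, (truncLog M z (x k) + Real.exp M * r) :=
          Finset.sum_le_sum fun k _ => (truncLog_le_add M y z (x k)).trans (by gcongr)
      _ = _ := by rw [Finset.sum_add_distrib, Finset.sum_const, Finset.card_range, nsmul_eq_mul]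
  calc ‖∏ k ∈ Finset.range n, (y - x k)‖
      ≤ Real.exp (∑ k ∈ Finset.range n, truncLog M y (x k)) := norm_prod_sub_le_exp_sum M y n x
    _ < 1 := Real.exp_lt_one_iff.2 (hsum.trans_lt h)

section Potential

variable {μ : Measure ℂ}

lemma msupport_eq_support : msupport μ = μ.support :=
  Set.ext fun x => (Measure.mem_support_iff_forall x).symm

lemma integrable_log_norm_sub [IsFiniteMeasure μ] (hA : AssumptionA μ) (z : ℂ) :
    Integrable (fun w => Real.log ‖z - w‖) μ := by
  obtain ⟨C, hC⟩ := hA {z} isCompact_singleton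
  have hmeas : AEStronglyMeasurable (fun w => Real.log ‖z - w‖) μ :=
    ((continuous_const.sub continuous_id).norm.measurable.log).aestronglyMeasurable
  have hsq : Integrable (fun w => Real.log ‖z - w‖ ^ 2) μ :=
    ⟨hmeas.pow 2, (hasFiniteIntegral_iff_ofReal (ae_of_all _ fun _ => sq_nonneg _)).2
      ((hC z rfl).trans_lt ENNReal.ofReal_lt_top)⟩
  exact ((memLp_two_iff_integrable_sq hmeas).2 hsq).integrable one_le_two

lemma integrable_truncLog [IsFiniteMeasure μ] {z : ℂ}
    (hint : Integrable (fun w => Real.log ‖z - w‖) μ) (M : ℝ) : Integrable (truncLog M z) μ := by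
  refine (hint.abs.add (integrable_const |M|)).mono'
    (continuous_truncLog M z).aestronglyMeasurable (ae_of_all _ fun w => ?_)
  rw [Real.norm_eq_abs, Pi.add_apply, abs_le]
  have hlow := neg_le_truncLog M z w
  have hupp := truncLog_le_max M z w
  constructor
  · linarith [abs_nonneg (Real.log ‖z - w‖), le_abs_self M]
  · exact hupp.trans (max_le (by linarith [le_abs_self (Real.log ‖z - w‖), abs_nonneg M])
      (by linarith [abs_nonneg (Real.log ‖z - w‖), neg_le_abs M]))

/-- Monotone convergence of `max (log |z - w|) (-n)` down to `log |z - w|`. -/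
lemma exists_integral_truncLog_neg [IsFiniteMeasure μ] {z : ℂ}
    (hint : Integrable (fun w => Real.log ‖z - w‖) μ) (hz : logPot μ z < 0) :
    ∃ M : ℝ, ∫ w, truncLog M z w ∂μ < 0 := by
  have hmax : ∀ n : ℕ, Integrable (fun w => max (Real.log ‖z - w‖) (-n)) μ :=
    fun n => hint.sup (integrable_const _)
  have htend : Tendsto (fun n : ℕ => ∫ w, max (Real.log ‖z - w‖) (-n) ∂μ) atTop
      (𝓝 (logPot μ z)) := by
    refine integral_tendsto_of_tendsto_of_antitone hmax hint
      (ae_of_all _ fun w m n hmn => max_le_max le_rfl (neg_le_neg (Nat.cast_le.2 hmn)))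
      (ae_of_all _ fun w => tendsto_const_nhds.congr' ?_)
    filter_upwards [tendsto_natCast_atTop_atTop.eventually_ge_atTop (-Real.log ‖z - w‖)]
      with n hn
    exact (max_eq_left (neg_le.1 hn)).symm
  obtain ⟨n, hn⟩ := (htend.eventually_lt_const hz).exists
  exact ⟨n, (integral_mono (integrable_truncLog hint n) (hmax n) (truncLog_le_max n z)).trans_lt hn⟩

end Potential

lemma ae_tendsto_average_comp {Ω E : Type*} [MeasurableSpace Ω] [MeasurableSpace E]
    {P : Measure Ω} {μ : Measure E} {X : ℕ → Ω → E} (hmeas : ∀ i, Measurable (X i))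
    (hid : ∀ i, P.map (X i) = μ) (hindep : iIndepFun X P) {f : E → ℝ} (hf : Measurable f)
    (hfi : Integrable f μ) :
    ∀ᵐ ω ∂P, Tendsto (fun n : ℕ => (∑ k ∈ Finset.range n, f (X k ω)) / n) atTop
      (𝓝 (∫ x, f x ∂μ)) := by
  have hident : ∀ i, IdentDistrib (f ∘ X i) (f ∘ X 0) P P := fun i =>
    IdentDistrib.comp ⟨(hmeas i).aemeasurable, (hmeas 0).aemeasurable, by rw [hid i, hid 0]⟩ hf
  have hint : Integrable (f ∘ X 0) P := by
    rw [← hid 0] at hfi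
    exact hfi.comp_measurable (hmeas 0)
  rw [← hid 0, integral_map (hmeas 0).aemeasurable hf.aestronglyMeasurable]
  exact strong_law_ae_real (fun i => f ∘ X i) hint
    (fun i j hij => (hindep.indepFun hij).comp hf hf) hident

section RandomLemniscate

variable {Ω : Type*} [MeasurableSpace Ω] {P : Measure Ω} {μ : Measure ℂ} [IsFiniteMeasure μ]
  {X : ℕ → Ω → ℂ}

lemma exists_ball_ae_eventually_subset_lemniscate (hmeas : ∀ i, Measurable (X i))
    (hid : ∀ i, P.map (X i) = μ) (hindep : iIndepFun X P) {z : ℂ}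
    (hint : Integrable (fun w => Real.log ‖z - w‖) μ) (hz : logPot μ z < 0) :
    ∃ r > 0, ∀ᵐ ω ∂P, ∀ᶠ n in atTop, ball z r ⊆ lemniscate X n ω := by
  obtain ⟨M, hM⟩ := exists_integral_truncLog_neg hint hz
  set F := ∫ w, truncLog M z w ∂μ
  -- the radius is chosen so that the Lipschitz error `exp M * r` is `-F / 2`
  have hLip : Real.exp M * (-F / 2 * Real.exp (-M)) = -F / 2 := by
    rw [mul_left_comm, ← Real.exp_add, add_neg_cancel, Real.exp_zero, mul_one]
  refine ⟨-F / 2 * Real.exp (-M), mul_pos (by linarith) (Real.exp_pos _), ?_⟩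
  filter_upwards [ae_tendsto_average_comp hmeas hid hindep (continuous_truncLog M z).measurable
    (integrable_truncLog hint M)] with ω hω
  filter_upwards [hω.eventually_lt_const (show F < F / 2 by linarith), eventually_gt_atTop 0]
    with n hn hn0 y hy
  refine norm_prod_sub_lt_one (M := M) (mem_ball_iff_norm.1 hy).le ?_
  rw [hLip]
  rw [div_lt_iff₀ (Nat.cast_pos.2 hn0)] at hn
  linarith

lemma ae_eventually_subset_lemniscate (hmeas : ∀ i, Measurable (X i))
    (hid : ∀ i, P.map (X i) = μ) (hindep : iIndepFun X P) {K : Set ℂ} (hK : IsCompact K)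
    (hint : ∀ z ∈ K, Integrable (fun w => Real.log ‖z - w‖) μ)
    (hKneg : K ⊆ {z | logPot μ z < 0}) :
    ∀ᵐ ω ∂P, ∀ᶠ n in atTop, K ⊆ lemniscate X n ω := by
  choose! r hr hball using fun z hz =>
    exists_ball_ae_eventually_subset_lemniscate hmeas hid hindep (hint z hz) (hKneg hz)
  obtain ⟨t, htK, hKt⟩ :=
    hK.elim_nhds_subcover (fun z => ball z (r z)) fun z hz => ball_mem_nhds z (hr z hz)
  filter_upwards [(eventually_all_finset t).2 fun z hz => hball z (htK z hz)] with ω hω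
  filter_upwards [(eventually_all_finset t).2 hω] with n hn
  exact hKt.trans (Set.iUnion₂_subset hn)

end RandomLemniscate

theorem statement3_general
    {Ω : Type*} [MeasurableSpace Ω] (P : Measure Ω)
    (μ : Measure ℂ) [IsProbabilityMeasure μ] (hS : IsCompact (msupport μ))
    (hA : AssumptionA μ)
    (X : ℕ → Ω → ℂ) (hmeas : ∀ i, Measurable (X i))
    (hid : ∀ i, Measure.map (X i) P = μ)
    (hindep : iIndepFun X P) :
    ∀ᵐ ω ∂P, inradius {z : ℂ | logPot μ z < 0} ≤
      Filter.liminf (fun n : ℕ => inradius (lemniscate X n ω)) atTop := by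
  have hT : Bornology.IsBounded (thickening 1 (msupport μ)) := hS.isBounded.thickening
  have hsupp : ∀ᵐ ω ∂P, ∀ k, X k ω ∈ msupport μ := ae_all_iff.2 fun k =>
    ae_of_ae_map (hmeas k).aemeasurable <| by
      rw [hid k, msupport_eq_support]
      exact Measure.support_mem_ae
  have hrat : ∀ q : ℚ, (∃ c, closedBall c (q : ℝ) ⊆ {z | logPot μ z < 0}) →
      ∀ᵐ ω ∂P, ∀ᶠ n in atTop, (q : ℝ) ≤ inradius (lemniscate X n ω) := by
    rintro q ⟨c, hc⟩
    filter_upwards [ae_eventually_subset_lemniscate hmeas hid hindep (isCompact_closedBall c q)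
      (fun z _ => integrable_log_norm_sub hA z) hc, hsupp] with ω hω hωS
    filter_upwards [hω] with n hn
    exact le_inradius_of_ball_subset (hT.subset (lemniscate_subset_thickening hωS n))
      (ball_subset_closedBall.trans hn)
  filter_upwards [ae_all_iff.2 fun q => eventually_imp_distrib_left.2 (hrat q), hsupp]
    with ω hω hωS
  exact inradius_le_liminf (fun n => inradius_nonneg _)
    (fun n => inradius_mono hT (lemniscate_subset_thickening hωS n)) hω

theorem statement3
    {Ω : Type*} [MeasurableSpace Ω] (P : Measure Ω) [IsProbabilityMeasure P]
    (μ : Measure ℂ) [IsProbabilityMeasure μ] (hS : IsCompact (msupport μ))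
    (hA : AssumptionA μ)
    (X : ℕ → Ω → ℂ) (hmeas : ∀ i, Measurable (X i))
    (hid : ∀ i, Measure.map (X i) P = μ)
    (hindep : iIndepFun X P)
    (hneg : Set.Nonempty {z : ℂ | logPot μ z < 0}) :
    ∀ᵐ ω ∂P, inradius {z : ℂ | logPot μ z < 0} ≤
      Filter.liminf (fun n : ℕ => inradius (lemniscate X n ω)) atTop :=
  statement3_general P μ hS hA X hmeas hid hindep
end

section
/- Assume μ satisfies Assumption (A) and let K be a nonempty compact subset of Ω⁻. Then there exists a constant c > 0 such that for all z ∈ K and all sufficiently large n, the probability that log|p_n(z)| > −log 2 is at most e^{−cn}. -/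
/-!
`log|p_n(z)|` is the sum of the i.i.d. variables `Y_k = log|z - X_k|`, whose mean `U_μ(z)` is
negative. As the support of `μ` is compact, `Y_k ≤ M`, so `e^u ≤ 1 + u + u²` (for `u ≤ 1`) gives
`E e^{tY} ≤ 1 + t U_μ(z) + t² E Y² ≤ e^{-tδ/2}` for small `t > 0`, and Chernoff's bound yields
`P(log|p_n(z)| > -log 2) ≤ 2^t e^{-tδn/2}`. The constants are uniform on `K`: Assumption (A)
bounds `E Y²` uniformly, and `U_μ` is upper semicontinuous, as the decreasing limit of the
continuous truncated potentials `∫ max(log|z - w|, -T) dμ(w)`, so it has a negative maximum `-δ`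
on `K`. Assumption (A) also forces `μ` to have no atoms, so almost surely no `X_k` equals `z`.
-/

open MeasureTheory ProbabilityTheory Filter Metric

open Topology

lemma measurable_log_norm_sub (z : ℂ) : Measurable fun w : ℂ => Real.log ‖z - w‖ := by
  fun_prop

lemma exp_le_one_add_add_sq {u : ℝ} (hu : u ≤ 1) : Real.exp u ≤ 1 + u + u ^ 2 := by
  rcases le_total (-1) u with h | h
  · have := (abs_le.mp (Real.abs_exp_sub_one_sub_id_le (abs_le.mpr ⟨h, hu⟩))).2
    linarith
  · nlinarith [Real.exp_le_one_iff.mpr (by linarith : u ≤ 0)]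

theorem AssumptionA.nullSingletonClass {μ : Measure ℂ} [IsFiniteMeasure μ] (hA : AssumptionA μ) :
    NullSingletonClass μ := by
  refine ⟨fun x => ?_⟩
  obtain ⟨C, hC⟩ := hA (closedBall x 1) (isCompact_closedBall x 1)
  -- at `z = x + e^{-a}` the atom alone contributes `a² μ{x}` to the integral
  have hbound : ∀ a : ℝ, 0 ≤ a → a ^ 2 * μ.real {x} ≤ max C 0 := by
    intro a ha
    set z : ℂ := x + (Real.exp (-a) : ℂ)
    have hzx : ‖z - x‖ = Real.exp (-a) := by
      rw [add_sub_cancel_left, Complex.norm_real, Real.norm_of_nonneg (Real.exp_pos _).le]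
    have hz : z ∈ closedBall x 1 := by
      rw [mem_closedBall, dist_eq_norm, hzx]
      exact Real.exp_le_one_iff.mpr (neg_nonpos.mpr ha)
    have hlog : Real.log ‖z - x‖ = -a := by rw [hzx, Real.log_exp]
    have h : ENNReal.ofReal (a ^ 2) * μ {x} ≤ ENNReal.ofReal (max C 0) :=
      calc ENNReal.ofReal (a ^ 2) * μ {x}
          = ∫⁻ w in {x}, ENNReal.ofReal (Real.log ‖z - w‖ ^ 2) ∂μ := by
            rw [lintegral_singleton, hlog, neg_sq]
        _ ≤ ∫⁻ w, ENNReal.ofReal (Real.log ‖z - w‖ ^ 2) ∂μ := setLIntegral_le_lintegral _ _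
        _ ≤ ENNReal.ofReal (max C 0) :=
            (hC z hz).trans (ENNReal.ofReal_le_ofReal (le_max_left _ _))
    have := ENNReal.toReal_le_of_le_ofReal (le_max_right _ _) h
    rwa [ENNReal.toReal_mul, ENNReal.toReal_ofReal (sq_nonneg a)] at this
  by_contra hx
  have hm : 0 < μ.real {x} := ENNReal.toReal_pos hx (measure_ne_top μ _)
  have hC' : 0 < (max C 0 + 1) / μ.real {x} := by positivity
  have := hbound _ (Real.sqrt_nonneg ((max C 0 + 1) / μ.real {x}))
  rw [Real.sq_sqrt hC'.le, div_mul_cancel₀ _ hm.ne'] at this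
  linarith

theorem AssumptionA.integrable_sq {μ : Measure ℂ} (hA : AssumptionA μ) (z : ℂ) :
    Integrable (fun w => Real.log ‖z - w‖ ^ 2) μ := by
  obtain ⟨C, hC⟩ := hA {z} isCompact_singleton
  refine ⟨((measurable_log_norm_sub z).pow_const 2).aestronglyMeasurable, ?_⟩
  rw [hasFiniteIntegral_iff_ofReal (ae_of_all _ fun w => sq_nonneg _)]
  exact (hC z rfl).trans_lt ENNReal.ofReal_lt_top

theorem AssumptionA.integrable {μ : Measure ℂ} [IsFiniteMeasure μ] (hA : AssumptionA μ) (z : ℂ) :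
    Integrable (fun w => Real.log ‖z - w‖) μ :=
  ((memLp_two_iff_integrable_sq (measurable_log_norm_sub z).aestronglyMeasurable).mpr
    (hA.integrable_sq z)).integrable one_le_two

theorem AssumptionA.exists_integral_sq_le {μ : Measure ℂ} (hA : AssumptionA μ) {K : Set ℂ}
    (hK : IsCompact K) : ∃ C, ∀ z ∈ K, ∫ w, Real.log ‖z - w‖ ^ 2 ∂μ ≤ C := by
  obtain ⟨C, hC⟩ := hA K hK
  refine ⟨max C 0, fun z hz => ?_⟩
  rw [integral_eq_lintegral_of_nonneg_ae (ae_of_all _ fun w => sq_nonneg _)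
    ((measurable_log_norm_sub z).pow_const 2).aestronglyMeasurable]
  exact ENNReal.toReal_le_of_le_ofReal (le_max_right _ _)
    ((hC z hz).trans (ENNReal.ofReal_le_ofReal (le_max_left _ _)))

noncomputable def truncLogPot (μ : Measure ℂ) (T : ℝ) (z : ℂ) : ℝ :=
  ∫ w, max (Real.log ‖z - w‖) (-T) ∂μ

lemma abs_max_log_norm_sub_le {z z' : ℂ} (h : ‖z' - z‖ ≤ 1) (w : ℂ) (T : ℝ) :
    |max (Real.log ‖z' - w‖) (-T)| ≤ |T| + Real.log 2 + |Real.log ‖z - w‖| := by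
  have hpos : Real.posLog ‖z' - w‖ ≤ Real.log 2 + |Real.log ‖z - w‖| := by
    have hadd := Real.posLog_norm_add_le (z' - z) (z - w)
    rw [sub_add_sub_cancel, (Real.posLog_eq_zero_iff ‖z' - z‖).mpr (by rwa [abs_norm])] at hadd
    have : Real.posLog ‖z - w‖ ≤ |Real.log ‖z - w‖| := max_le (abs_nonneg _) (le_abs_self _)
    linarith
  have hlog : Real.log ‖z' - w‖ ≤ Real.posLog ‖z' - w‖ := le_max_right _ _
  have hnonneg : 0 ≤ Real.posLog ‖z' - w‖ := Real.posLog_nonneg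
  calc |max (Real.log ‖z' - w‖) (-T)|
      ≤ |T| + Real.posLog ‖z' - w‖ := abs_le.mpr
        ⟨by linarith [le_abs_self T, le_max_right (Real.log ‖z' - w‖) (-T)],
          max_le (by linarith [abs_nonneg T]) (by linarith [neg_le_abs T])⟩
    _ ≤ |T| + Real.log 2 + |Real.log ‖z - w‖| := by linarith

section Truncation

variable {μ : Measure ℂ} {z : ℂ}

lemma logPot_le_truncLogPot [IsFiniteMeasure μ]
    (hz : Integrable (fun w => Real.log ‖z - w‖) μ) (T : ℝ) : logPot μ z ≤ truncLogPot μ T z :=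
  integral_mono hz (hz.sup (integrable_const _)) fun _ => le_max_left _ _

lemma tendsto_truncLogPot_atTop (hz : Integrable (fun w => Real.log ‖z - w‖) μ) :
    Tendsto (fun T => truncLogPot μ T z) atTop (𝓝 (logPot μ z)) := by
  refine tendsto_integral_filter_of_dominated_convergence (fun w => |Real.log ‖z - w‖|)
    (Eventually.of_forall fun T =>
      ((measurable_log_norm_sub z).max measurable_const).aestronglyMeasurable) ?_ hz.abs ?_
  · filter_upwards [eventually_ge_atTop 0] with T hT
    refine ae_of_all _ fun w => abs_le.mpr ⟨(neg_abs_le _).trans (le_max_left _ _), ?_⟩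
    exact max_le (le_abs_self _) (by linarith [abs_nonneg (Real.log ‖z - w‖)])
  · refine ae_of_all _ fun w => tendsto_const_nhds.congr' ?_
    filter_upwards [eventually_ge_atTop (-Real.log ‖z - w‖)] with T hT
    exact (max_eq_left (by linarith)).symm

lemma continuousAt_truncLogPot [IsFiniteMeasure μ] [NullSingletonClass μ]
    (hz : Integrable (fun w => Real.log ‖z - w‖) μ) (T : ℝ) : ContinuousAt (truncLogPot μ T) z := by
  refine continuousAt_of_dominated (bound := fun w => |T| + Real.log 2 + |Real.log ‖z - w‖|)
    (Eventually.of_forall fun z' =>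
      ((measurable_log_norm_sub z').max measurable_const).aestronglyMeasurable) ?_
    ((integrable_const _).add hz.abs) ?_
  · filter_upwards [closedBall_mem_nhds z one_pos] with z' hz'
    exact ae_of_all _ fun w => abs_max_log_norm_sub_le (by rwa [← dist_eq_norm]) w T
  · filter_upwards [compl_mem_ae_iff.mpr (measure_singleton z)] with w hw
    have hw : ‖z - w‖ ≠ 0 := norm_ne_zero_iff.mpr (sub_ne_zero.mpr (Ne.symm hw))
    exact ((continuous_id.sub continuous_const).norm.continuousAt.log hw).max continuousAt_const

theorem upperSemicontinuous_logPot [IsFiniteMeasure μ] [NullSingletonClass μ]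
    (hint : ∀ z, Integrable (fun w => Real.log ‖z - w‖) μ) : UpperSemicontinuous (logPot μ) := by
  intro z y hy
  obtain ⟨T, hT⟩ := ((tendsto_truncLogPot_atTop (hint z)).eventually (gt_mem_nhds hy)).exists
  filter_upwards [(continuousAt_truncLogPot (hint z) T).eventually (gt_mem_nhds hT)] with z' hz'
  exact (logPot_le_truncLogPot (hint z') T).trans_lt hz'

theorem exists_pos_forall_logPot_le_neg [IsFiniteMeasure μ] [NullSingletonClass μ]
    (hint : ∀ z, Integrable (fun w => Real.log ‖z - w‖) μ) {K : Set ℂ} (hK : IsCompact K)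
    (hKne : K.Nonempty) (hKsub : K ⊆ {z | logPot μ z < 0}) :
    ∃ δ > 0, ∀ z ∈ K, logPot μ z ≤ -δ := by
  obtain ⟨z₀, hz₀, hmax⟩ :=
    ((upperSemicontinuous_logPot hint).upperSemicontinuousOn K).exists_isMaxOn hKne hK
  exact ⟨-logPot μ z₀, neg_pos.mpr (hKsub hz₀), fun z hz => by simpa using hmax hz⟩

end Truncation

theorem exists_forall_ae_log_norm_sub_le {μ : Measure ℂ} (hS : IsCompact (msupport μ))
    {K : Set ℂ} (hK : IsCompact K) : ∃ M, ∀ z ∈ K, ∀ᵐ w ∂μ, Real.log ‖z - w‖ ≤ M := by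
  obtain ⟨M, hM⟩ := (hK.prod hS).exists_bound_of_continuousOn
    (f := fun p : ℂ × ℂ => p.1 - p.2) (by fun_prop)
  have hsupp : msupport μ = μ.support := Set.ext fun x => (Measure.mem_support_iff_forall x).symm
  refine ⟨M, fun z hz => ?_⟩
  filter_upwards [hsupp ▸ Measure.support_mem_ae] with w hw
  exact (Real.log_le_self (norm_nonneg _)).trans (hM (z, w) ⟨hz, hw⟩)

section Chernoff

variable {Ω : Type*} [MeasurableSpace Ω] {P : Measure Ω}

lemma integrable_exp_mul_of_ae_le [IsFiniteMeasure P] {Y : Ω → ℝ} (hY : AEMeasurable Y P)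
    {M t : ℝ} (ht : 0 ≤ t) (hM : ∀ᵐ ω ∂P, Y ω ≤ M) :
    Integrable (fun ω => Real.exp (t * Y ω)) P := by
  refine Integrable.of_bound (hY.const_mul t).exp.aestronglyMeasurable (Real.exp (t * M)) ?_
  filter_upwards [hM] with ω hω
  rw [Real.norm_of_nonneg (Real.exp_pos _).le]
  exact Real.exp_le_exp.mpr (mul_le_mul_of_nonneg_left hω ht)

theorem mgf_le_exp_of_ae_le [IsProbabilityMeasure P] {Y : Ω → ℝ} (hY : AEMeasurable Y P)
    (hY2 : Integrable (fun ω => Y ω ^ 2) P) {M C δ t : ℝ} (hM : ∀ᵐ ω ∂P, Y ω ≤ M)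
    (hmean : ∫ ω, Y ω ∂P ≤ -δ) (hC : ∫ ω, Y ω ^ 2 ∂P ≤ C) (ht : 0 ≤ t) (htM : t * M ≤ 1)
    (htC : t * C ≤ δ / 2) :
    mgf Y P t ≤ Real.exp (-(t * δ / 2)) := by
  have hY1 : Integrable Y P :=
    ((memLp_two_iff_integrable_sq hY.aestronglyMeasurable).mpr hY2).integrable one_le_two
  have htY : ∀ᵐ ω ∂P, t * Y ω ≤ 1 := by
    filter_upwards [hM] with ω hω
    exact (mul_le_mul_of_nonneg_left hω ht).trans htM
  have hquad : ∀ᵐ ω ∂P, Real.exp (t * Y ω) ≤ 1 + t * Y ω + t ^ 2 * Y ω ^ 2 := by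
    filter_upwards [htY] with ω hω
    simpa [mul_pow] using exp_le_one_add_add_sq hω
  have hlin : t * ∫ ω, Y ω ∂P ≤ t * -δ := mul_le_mul_of_nonneg_left hmean ht
  have hsq : t ^ 2 * ∫ ω, Y ω ^ 2 ∂P ≤ t * (δ / 2) := by
    rw [sq, mul_assoc]
    exact mul_le_mul_of_nonneg_left ((mul_le_mul_of_nonneg_left hC ht).trans htC) ht
  have hlin_int : Integrable (fun ω => 1 + t * Y ω) P := (integrable_const 1).add (hY1.const_mul t)
  calc mgf Y P t
      ≤ ∫ ω, (1 + t * Y ω + t ^ 2 * Y ω ^ 2) ∂P :=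
        integral_mono_ae (integrable_exp_mul_of_ae_le hY ht hM) (hlin_int.add (hY2.const_mul _))
          hquad
    _ = 1 + t * ∫ ω, Y ω ∂P + t ^ 2 * ∫ ω, Y ω ^ 2 ∂P := by
        rw [integral_add hlin_int (hY2.const_mul _),
          integral_add (integrable_const 1) (hY1.const_mul t), integral_const_mul,
          integral_const_mul, integral_const, probReal_univ, one_smul]
    _ ≤ 1 + -(t * δ / 2) := by linarith
    _ ≤ Real.exp (-(t * δ / 2)) := by linarith [Real.add_one_le_exp (-(t * δ / 2))]

theorem measureReal_le_sum_le_exp_mul_pow {Y : ℕ → Ω → ℝ} (hY : ∀ k, Measurable (Y k))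
    (hind : iIndepFun Y P) {t m : ℝ} (ht : 0 ≤ t)
    (hint : ∀ k, Integrable (fun ω => Real.exp (t * Y k ω)) P) (hm : ∀ k, mgf (Y k) P t = m)
    (x : ℝ) (n : ℕ) :
    P.real {ω | x ≤ ∑ k ∈ Finset.range n, Y k ω} ≤ Real.exp (-t * x) * m ^ n := by
  have := hind.isProbabilityMeasure
  have h := measure_ge_le_exp_mul_mgf (X := ∑ k ∈ Finset.range n, Y k) x ht
    (hind.integrable_exp_mul_sum hY fun k _ => hint k)
  rwa [hind.mgf_sum hY, Finset.prod_congr rfl fun k _ => hm k, Finset.prod_const,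
    Finset.card_range, Finset.sum_fn] at h

end Chernoff

lemma log_norm_prod_sub_eq_sum {s : Finset ℕ} {x : ℕ → ℂ} {z : ℂ} (h : ∀ k ∈ s, x k ≠ z) :
    Real.log ‖∏ k ∈ s, (z - x k)‖ = ∑ k ∈ s, Real.log ‖z - x k‖ := by
  rw [norm_prod]
  exact Real.log_prod fun k hk => norm_ne_zero_iff.mpr (sub_ne_zero.mpr (h k hk).symm)

theorem measure_lt_log_norm_prod_le {Ω : Type*} [MeasurableSpace Ω] {P : Measure Ω}
    {μ : Measure ℂ} [NullSingletonClass μ] {X : ℕ → Ω → ℂ}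
    (hX : ∀ k, Measurable (X k)) (hid : ∀ k, P.map (X k) = μ) (hind : iIndepFun X P)
    {z : ℂ} {t : ℝ} (ht : 0 ≤ t)
    (hint : Integrable (fun w => Real.exp (t * Real.log ‖z - w‖)) μ) (x : ℝ) (n : ℕ) :
    P {ω | x < Real.log ‖∏ k ∈ Finset.range n, (z - X k ω)‖} ≤
      ENNReal.ofReal (Real.exp (-t * x) * mgf (fun w => Real.log ‖z - w‖) μ t ^ n) := by
  have := hind.isProbabilityMeasure
  set Y : ℕ → Ω → ℝ := fun k ω => Real.log ‖z - X k ω‖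
  have hY : ∀ k, Measurable (Y k) := fun k => (measurable_log_norm_sub z).comp (hX k)
  have hintY : ∀ k, Integrable (fun ω => Real.exp (t * Y k ω)) P := fun k =>
    (hid k ▸ hint).comp_measurable (hX k)
  have hmgf : ∀ k, mgf (Y k) P t = mgf (fun w => Real.log ‖z - w‖) μ t := fun k => by
    rw [← hid k, mgf_map (hX k).aemeasurable (hid k ▸ hint.aestronglyMeasurable)]
    rfl
  -- since `log 0 = 0`, the product formula needs `X k ≠ z`, which holds a.s. as `μ` has no atoms
  have hne : ∀ᵐ ω ∂P, ∀ k, X k ω ≠ z := ae_all_iff.mpr fun k =>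
    ae_of_ae_map (p := fun w => w ≠ z) (hX k).aemeasurable
      (by rw [hid k]; exact compl_mem_ae_iff.mpr (measure_singleton z))
  calc P {ω | x < Real.log ‖∏ k ∈ Finset.range n, (z - X k ω)‖}
      ≤ P {ω | x ≤ ∑ k ∈ Finset.range n, Y k ω} := by
        refine measure_mono_ae ?_
        filter_upwards [hne] with ω hω (hx : x < _)
        rw [log_norm_prod_sub_eq_sum fun k _ => hω k] at hx
        exact hx.le
    _ = ENNReal.ofReal (P.real {ω | x ≤ ∑ k ∈ Finset.range n, Y k ω}) :=
        (ofReal_measureReal (measure_ne_top P _)).symm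
    _ ≤ _ := ENNReal.ofReal_le_ofReal <| measureReal_le_sum_le_exp_mul_pow hY
        (hind.comp _ fun _ => measurable_log_norm_sub z) ht hintY hmgf x n

lemma exists_pos_mul_le_and_mul_le {a b : ℝ} (ha : 0 < a) (hb : 0 < b) (M C : ℝ) :
    ∃ t > 0, t * M ≤ a ∧ t * C ≤ b := by
  have small : ∀ c > 0, ∀ L : ℝ, ∀ᶠ t in 𝓝[>] (0 : ℝ), t * L ≤ c := fun c hc L =>
    nhdsWithin_le_nhds <|
      ((continuous_mul_const L).tendsto' 0 0 (zero_mul L)).eventually (ge_mem_nhds hc)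
  obtain ⟨t, ht, htM, htC⟩ :=
    (eventually_mem_nhdsWithin.and ((small a ha M).and (small b hb C))).exists
  exact ⟨t, ht, htM, htC⟩

theorem statement12
    {Ω : Type*} [MeasurableSpace Ω] (P : Measure Ω) [IsProbabilityMeasure P]
    (μ : Measure ℂ) [IsProbabilityMeasure μ] (hS : IsCompact (msupport μ))
    (hA : AssumptionA μ)
    (X : ℕ → Ω → ℂ) (hmeas : ∀ i, Measurable (X i))
    (hid : ∀ i, Measure.map (X i) P = μ)
    (hindep : iIndepFun X P)
    (K : Set ℂ) (hK : IsCompact K) (hKne : K.Nonempty)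
    (hKsub : K ⊆ {z : ℂ | logPot μ z < 0}) :
    ∃ c > (0 : ℝ), ∀ z ∈ K, ∀ᶠ n : ℕ in atTop,
      P {ω | -Real.log 2 <
          Real.log ‖∏ k ∈ Finset.range n, (z - X k ω)‖} ≤
        ENNReal.ofReal (Real.exp (-c * n)) := by
  have := hA.nullSingletonClass
  obtain ⟨δ, hδ, hUδ⟩ := exists_pos_forall_logPot_le_neg hA.integrable hK hKne hKsub
  obtain ⟨C, hC⟩ := hA.exists_integral_sq_le hK
  obtain ⟨M, hM⟩ := exists_forall_ae_log_norm_sub_le hS hK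
  obtain ⟨t, ht, htM, htC⟩ := exists_pos_mul_le_and_mul_le one_pos (half_pos hδ) M C
  refine ⟨t * δ / 4, by positivity, fun z hz => ?_⟩
  have hmgf : mgf (fun w => Real.log ‖z - w‖) μ t ≤ Real.exp (-(t * δ / 2)) :=
    mgf_le_exp_of_ae_le (measurable_log_norm_sub z).aemeasurable (hA.integrable_sq z) (hM z hz)
      (hUδ z hz) (hC z hz) ht.le htM htC
  filter_upwards [tendsto_natCast_atTop_atTop.eventually_ge_atTop (4 * Real.log 2 / δ)] with n hn
  have hn : 4 * Real.log 2 ≤ δ * n := by rwa [div_le_iff₀' hδ] at hn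
  refine (measure_lt_log_norm_prod_le hmeas hid hindep ht.le (integrable_exp_mul_of_ae_le
    (measurable_log_norm_sub z).aemeasurable ht.le (hM z hz)) _ n).trans
    (ENNReal.ofReal_le_ofReal ?_)
  calc Real.exp (-t * -Real.log 2) * mgf (fun w => Real.log ‖z - w‖) μ t ^ n
      ≤ Real.exp (-t * -Real.log 2) * Real.exp (-(t * δ / 2)) ^ n := by
        gcongr
        exact mgf_nonneg
    _ = Real.exp (t * Real.log 2 - t * δ / 2 * n) := by
        rw [← Real.exp_nat_mul, ← Real.exp_add]
        ring_nf
    _ ≤ Real.exp (-(t * δ / 4) * n) := Real.exp_le_exp.mpr (by nlinarith)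
end
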